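/- arXiv:1603.01895 — 3 statements merged into one kernel-verified Lean document; each statement's English description precedes it below -/
import Mathlib

section
/- Let Z₁,…,Z_ℓ be binary (0/1-valued) random variables and for each i let pᵢ = Pr(Zᵢ = 1 | Z₁,…,Z_{i−1}). Let Z = ∑ᵢ Zᵢ and B = ∑ᵢ pᵢ. If b ≥ 0 is such that B ≤ b almost surely, then for any δ > 0, Pr(Z > (1+δ)·b) < (e^δ / (1+δ)^{1+δ})^b. -/
/-!
Write `p_j = E[Z_j | Z_i, i < j]`. The products `∏_{j ∈ s} (1 + δ Z_j) e^{-δ p_j}` have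
expectation at most `1`: adding the latest index `a` multiplies by a factor whose conditional
mean given the past is `(1 + δ p_a) e^{-δ p_a} ≤ 1`. Since `∑ p_j ≤ b`, this gives
`E ∏_j (1 + δ Z_j) ≤ e^{δ b}`, and for binary `Z_j` the product is `(1 + δ)^Z`. Markov's
inequality at the level `(1 + δ)^{(1 + δ) b}`, strict because `(1 + δ)^Z` exceeds this level on
the event, yields the bound.
-/

open MeasureTheory Finset

section PastFiltration
variable {Ω ι β : Type*} {m0 : MeasurableSpace Ω} [Preorder ι] [MeasurableSpace β]

def pastFiltration (Z : ι → Ω → β) (hZ : ∀ i, Measurable (Z i)) : Filtration ι m0 where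
  seq i := ⨆ j, ⨆ _ : j < i, MeasurableSpace.comap (Z j) inferInstance
  mono' _ _ hik := iSup₂_mono' fun j hj => ⟨j, hj.trans_le hik, le_rfl⟩
  le' _ := iSup₂_le fun j _ => (hZ j).comap_le

theorem measurable_pastFiltration {Z : ι → Ω → β} (hZ : ∀ i, Measurable (Z i)) {i j : ι}
    (hji : j < i) : Measurable[pastFiltration Z hZ i] (Z j) :=
  measurable_iff_comap_le.mpr <|
    le_iSup₂ (f := fun k (_ : k < i) => MeasurableSpace.comap (Z k) inferInstance) j hji

end PastFiltration

section FiniteMeasure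
variable {Ω ι : Type*} {m m0 : MeasurableSpace Ω} {μ : Measure Ω} [IsFiniteMeasure μ]

theorem mul_meas_gt_lt_integral_of_nonneg {f : Ω → ℝ} (hf : Measurable f)
    (hf_nonneg : 0 ≤ᵐ[μ] f) (hf_pos : 0 < ∫ x, f x ∂μ) (t : ℝ) :
    t * μ.real {x | t < f x} < ∫ x, f x ∂μ := by
  set A := {x | t < f x}
  rcases le_or_gt t 0 with ht | ht
  · exact (mul_nonpos_of_nonpos_of_nonneg ht measureReal_nonneg).trans_lt hf_pos
  by_cases hA : μ A = 0
  · simpa [measureReal_def, hA] using hf_pos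
  have hA_meas : MeasurableSet A := measurableSet_lt measurable_const hf
  have hf_int : Integrable f μ := .of_integral_ne_zero hf_pos.ne'
  have hgap_nonneg : 0 ≤ᵐ[μ] fun x => f x - A.indicator (fun _ => t) x := by
    filter_upwards [hf_nonneg] with x hx
    by_cases hxA : x ∈ A
    · simpa [hxA] using (le_of_lt hxA)
    · simpa [hxA] using hx
  have hgap_pos : 0 < ∫ x, f x - A.indicator (fun _ => t) x ∂μ := by
    refine (integral_pos_iff_support_of_nonneg_ae hgap_nonneg
      (hf_int.sub ((integrable_const t).indicator hA_meas))).mpr ?_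
    refine (pos_iff_ne_zero.mpr hA).trans_le (measure_mono fun x (hx : t < f x) => ?_)
    simp [Function.mem_support, A, hx, sub_ne_zero.mpr hx.ne']
  rw [integral_sub hf_int ((integrable_const t).indicator hA_meas),
    integral_indicator_const t hA_meas, smul_eq_mul] at hgap_pos
  linarith

theorem integral_mul_condExp (hm : m ≤ m0) {G Y : Ω → ℝ} (hG : StronglyMeasurable[m] G)
    (hGY : Integrable (G * Y) μ) (hY : Integrable Y μ) :
    ∫ ω, G ω * Y ω ∂μ = ∫ ω, G ω * μ[Y | m] ω ∂μ :=
  (integral_condExp hm).symm.trans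
    (integral_congr_ae (condExp_mul_of_stronglyMeasurable_left hG hGY hY))

theorem condExp_const_add_const_mul (hm : m ≤ m0) {f : Ω → ℝ} (hf : Integrable f μ) (a c : ℝ) :
    μ[fun ω => a + c * f ω | m] =ᵐ[μ] fun ω => a + c * μ[f | m] ω := by
  change μ[(fun _ => a) + c • f | m] =ᵐ[μ] _
  filter_upwards [condExp_add (integrable_const a) (hf.smul c) m, condExp_smul c f m]
    with ω hadd hsmul
  simp [hadd, hsmul, condExp_const hm]

theorem integrable_prod_one_add_mul {Z : ι → Ω → ℝ} {δ : ℝ} (hZ : ∀ i, Measurable (Z i))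
    (hδ : 0 ≤ δ) (hZ0 : ∀ i ω, 0 ≤ Z i ω) (hZ1 : ∀ i ω, Z i ω ≤ 1) (s : Finset ι) :
    Integrable (fun ω => ∏ i ∈ s, (1 + δ * Z i ω)) μ := by
  refine .of_bound (Finset.measurable_prod _ fun i _ =>
    measurable_const.add (measurable_const.mul (hZ i))).aestronglyMeasurable ((1 + δ) ^ #s)
    (.of_forall fun ω => ?_)
  rw [Real.norm_of_nonneg (prod_nonneg fun i _ => by nlinarith [hZ0 i ω]), ← prod_const]
  exact prod_le_prod (fun i _ => by nlinarith [hZ0 i ω]) fun i _ => by nlinarith [hZ1 i ω]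

end FiniteMeasure

section ChernoffProduct
variable {Ω ι : Type*} {m0 : MeasurableSpace Ω} {μ : Measure Ω} [LinearOrder ι]
  {F : Filtration ι m0} {Z : ι → Ω → ℝ} {δ : ℝ}

noncomputable def chernoffProduct (μ : Measure Ω) (F : Filtration ι m0) (Z : ι → Ω → ℝ) (δ : ℝ)
    (s : Finset ι) (ω : Ω) : ℝ :=
  ∏ j ∈ s, (1 + δ * Z j ω) * Real.exp (-(δ * μ[Z j | F j] ω))

theorem chernoffProduct_nonneg (hδ : 0 ≤ δ) (hZ0 : ∀ i ω, 0 ≤ Z i ω) (s : Finset ι) (ω : Ω) :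
    0 ≤ chernoffProduct μ F Z δ s ω :=
  prod_nonneg fun j _ => mul_nonneg (by nlinarith [hZ0 j ω]) (Real.exp_nonneg _)

theorem stronglyMeasurable_chernoffProduct {m : MeasurableSpace Ω} {s : Finset ι}
    (hZ : ∀ j ∈ s, Measurable[m] (Z j)) (hF : ∀ j ∈ s, F j ≤ m) :
    StronglyMeasurable[m] (chernoffProduct μ F Z δ s) := by
  refine Measurable.stronglyMeasurable (Finset.measurable_prod _ fun j hj => ?_)
  exact (measurable_const.add (measurable_const.mul (hZ j hj))).mul
    (Real.measurable_exp.comp ((measurable_const.mul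
      (stronglyMeasurable_condExp.measurable.mono (hF j hj) le_rfl)).neg))

theorem norm_chernoffProduct_le (hδ : 0 ≤ δ) (hZ0 : ∀ i ω, 0 ≤ Z i ω) (hZ1 : ∀ i ω, Z i ω ≤ 1)
    (s : Finset ι) : ∀ᵐ ω ∂μ, ‖chernoffProduct μ F Z δ s ω‖ ≤ (1 + δ) ^ #s := by
  have hp0 : ∀ᵐ ω ∂μ, ∀ j ∈ s, 0 ≤ μ[Z j | F j] ω :=
    (Filter.eventually_all_finset s).mpr fun j _ => condExp_nonneg (.of_forall (hZ0 j))
  filter_upwards [hp0] with ω hω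
  rw [Real.norm_of_nonneg (chernoffProduct_nonneg hδ hZ0 s ω), ← prod_const]
  refine prod_le_prod (fun j _ => mul_nonneg (by nlinarith [hZ0 j ω]) (Real.exp_nonneg _))
    fun j hj => ?_
  have hexp : Real.exp (-(δ * μ[Z j | F j] ω)) ≤ 1 :=
    Real.exp_le_one_iff.mpr (by nlinarith [hω j hj])
  simpa using mul_le_mul (by nlinarith [hZ1 j ω] : 1 + δ * Z j ω ≤ 1 + δ) hexp
    (Real.exp_nonneg _) (by linarith)

theorem integrable_chernoffProduct [IsFiniteMeasure μ] (hZ : ∀ i, Measurable (Z i))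
    (hδ : 0 ≤ δ) (hZ0 : ∀ i ω, 0 ≤ Z i ω) (hZ1 : ∀ i ω, Z i ω ≤ 1) (s : Finset ι) :
    Integrable (chernoffProduct μ F Z δ s) μ :=
  .of_bound (stronglyMeasurable_chernoffProduct (fun j _ => hZ j) (fun j _ => F.le j)
    |>.aestronglyMeasurable) _ (norm_chernoffProduct_le hδ hZ0 hZ1 s)

theorem integral_chernoffProduct_le_one [IsProbabilityMeasure μ] (hZ : ∀ i, Measurable (Z i))
    (hZF : ∀ j i, j < i → Measurable[F i] (Z j)) (hδ : 0 ≤ δ) (hZ0 : ∀ i ω, 0 ≤ Z i ω)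
    (hZ1 : ∀ i ω, Z i ω ≤ 1) (s : Finset ι) :
    ∫ ω, chernoffProduct μ F Z δ s ω ∂μ ≤ 1 := by
  classical
  induction s using Finset.induction_on_max with
  | empty => simp [chernoffProduct]
  | insert a s hlt ih =>
    set p : Ω → ℝ := μ[Z a | F a]
    set G : Ω → ℝ := fun ω => Real.exp (-(δ * p ω)) * chernoffProduct μ F Z δ s ω
    have hsplit : chernoffProduct μ F Z δ (insert a s) = G * fun ω => 1 + δ * Z a ω := by
      ext ω
      simp only [chernoffProduct, prod_insert fun ha => (hlt a ha).false, G, Pi.mul_apply, p]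
      ring
    have hG : StronglyMeasurable[F a] G :=
      (Real.continuous_exp.comp_stronglyMeasurable
        (stronglyMeasurable_condExp.const_mul δ).neg).mul
        (stronglyMeasurable_chernoffProduct (fun j hj => hZF j a (hlt j hj))
          fun j hj => F.mono (hlt j hj).le)
    have hZa : Integrable (Z a) μ :=
      .of_bound (hZ a).aestronglyMeasurable 1
        (.of_forall fun ω => by simpa [abs_of_nonneg (hZ0 a ω)] using hZ1 a ω)
    have hcompensator : ∀ ω, Real.exp (-(δ * p ω)) * (1 + δ * p ω) ≤ 1 := fun ω => by
      simpa [← Real.exp_add] using mul_le_mul_of_nonneg_left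
        (by linarith [Real.add_one_le_exp (δ * p ω)] : 1 + δ * p ω ≤ Real.exp (δ * p ω))
        (Real.exp_nonneg (-(δ * p ω)))
    have hp0 : 0 ≤ᵐ[μ] p := condExp_nonneg (.of_forall (hZ0 a))
    calc ∫ ω, chernoffProduct μ F Z δ (insert a s) ω ∂μ
        = ∫ ω, G ω * (1 + δ * Z a ω) ∂μ := by rw [hsplit]; rfl
      _ = ∫ ω, G ω * μ[fun ω => 1 + δ * Z a ω | F a] ω ∂μ :=
        integral_mul_condExp (F.le a) hG
          (hsplit ▸ integrable_chernoffProduct hZ hδ hZ0 hZ1 _)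
          ((integrable_const 1).add (hZa.const_mul δ))
      _ = ∫ ω, G ω * (1 + δ * p ω) ∂μ := by
        refine integral_congr_ae ?_
        filter_upwards [condExp_const_add_const_mul (F.le a) hZa 1 δ] with ω hω
        rw [hω]
      _ ≤ ∫ ω, chernoffProduct μ F Z δ s ω ∂μ := by
        refine integral_mono_of_nonneg ?_ (integrable_chernoffProduct hZ hδ hZ0 hZ1 s) ?_
        · filter_upwards [hp0] with ω hω
          exact mul_nonneg (mul_nonneg (Real.exp_nonneg _) (chernoffProduct_nonneg hδ hZ0 s ω))
            (by linarith [mul_nonneg hδ (show 0 ≤ p ω from hω)])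
        · refine .of_forall fun ω => ?_
          calc G ω * (1 + δ * p ω)
              = chernoffProduct μ F Z δ s ω * (Real.exp (-(δ * p ω)) * (1 + δ * p ω)) := by ring
            _ ≤ chernoffProduct μ F Z δ s ω :=
              mul_le_of_le_one_right (chernoffProduct_nonneg hδ hZ0 s ω) (hcompensator ω)
      _ ≤ 1 := ih

theorem integral_prod_one_add_mul_le_exp [IsProbabilityMeasure μ] (hZ : ∀ i, Measurable (Z i))
    (hZF : ∀ j i, j < i → Measurable[F i] (Z j)) (hδ : 0 ≤ δ) (hZ0 : ∀ i ω, 0 ≤ Z i ω)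
    (hZ1 : ∀ i ω, Z i ω ≤ 1) {s : Finset ι} {b : ℝ}
    (hB : ∀ᵐ ω ∂μ, ∑ i ∈ s, μ[Z i | F i] ω ≤ b) :
    ∫ ω, ∏ i ∈ s, (1 + δ * Z i ω) ∂μ ≤ Real.exp (δ * b) := by
  have hfactor : ∀ ω, ∏ i ∈ s, (1 + δ * Z i ω) =
      chernoffProduct μ F Z δ s ω * Real.exp (δ * ∑ i ∈ s, μ[Z i | F i] ω) := fun ω => by
    rw [chernoffProduct, prod_mul_distrib, mul_assoc, ← Real.exp_sum, ← Real.exp_add, mul_sum]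
    simp
  calc ∫ ω, ∏ i ∈ s, (1 + δ * Z i ω) ∂μ
      ≤ ∫ ω, chernoffProduct μ F Z δ s ω * Real.exp (δ * b) ∂μ := by
        refine integral_mono_of_nonneg (.of_forall fun ω => prod_nonneg fun i _ => ?_)
          ((integrable_chernoffProduct hZ hδ hZ0 hZ1 s).mul_const _) ?_
        · nlinarith [hZ0 i ω]
        filter_upwards [hB] with ω hω
        rw [hfactor]
        exact mul_le_mul_of_nonneg_left (Real.exp_le_exp.mpr (mul_le_mul_of_nonneg_left hω hδ))
          (chernoffProduct_nonneg hδ hZ0 s ω)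
    _ = (∫ ω, chernoffProduct μ F Z δ s ω ∂μ) * Real.exp (δ * b) := integral_mul_const _ _
    _ ≤ Real.exp (δ * b) :=
      mul_le_of_le_one_left (Real.exp_nonneg _)
        (integral_chernoffProduct_le_one hZ hZF hδ hZ0 hZ1 s)

end ChernoffProduct

theorem prod_one_add_mul_eq_rpow_sum {ι : Type*} {s : Finset ι} {z : ι → ℝ} {δ : ℝ}
    (hδ : 0 < 1 + δ) (hz : ∀ i ∈ s, z i = 0 ∨ z i = 1) :
    ∏ i ∈ s, (1 + δ * z i) = (1 + δ) ^ ∑ i ∈ s, z i := by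
  rw [Real.rpow_sum_of_pos hδ]
  exact prod_congr rfl fun i hi => by rcases hz i hi with h | h <;> simp [h]

theorem chernoff_upper_dependent_general
    {Ω : Type*} [MeasurableSpace Ω] (μ : Measure Ω) [IsProbabilityMeasure μ]
    (ℓ : ℕ) (Z : Fin ℓ → Ω → ℝ)
    (hmeas : ∀ i, Measurable (Z i))
    (hbin : ∀ i ω, Z i ω = 0 ∨ Z i ω = 1)
    (p : Fin ℓ → Ω → ℝ)
    (hp : ∀ i, p i =
      μ[Z i | ⨆ j : Fin ℓ, ⨆ _ : j < i, MeasurableSpace.comap (Z j) inferInstance])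
    (b : ℝ)
    (hB : ∀ᵐ ω ∂μ, (∑ i, p i ω) ≤ b)
    (δ : ℝ) (hδ : 0 < δ) :
    (μ {ω | (∑ i, Z i ω) > (1 + δ) * b}).toReal
      < (Real.exp δ / (1 + δ) ^ (1 + δ)) ^ b := by
  set F := pastFiltration Z hmeas
  obtain rfl : p = fun i => μ[Z i | F i] := funext hp
  have hZ0 : ∀ i ω, 0 ≤ Z i ω := fun i ω => by rcases hbin i ω with h | h <;> simp [h]
  have hZ1 : ∀ i ω, Z i ω ≤ 1 := fun i ω => by rcases hbin i ω with h | h <;> simp [h]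
  have h1δ : 1 < 1 + δ := by linarith
  set X : Ω → ℝ := fun ω => ∏ i, (1 + δ * Z i ω)
  have hX : ∀ ω, X ω = (1 + δ) ^ (∑ i, Z i ω) := fun ω =>
    prod_one_add_mul_eq_rpow_sum (by linarith) fun i _ => hbin i ω
  have hXint : Integrable X μ := integrable_prod_one_add_mul hmeas hδ.le hZ0 hZ1 univ
  have hX1 : ∀ ω, 1 ≤ X ω := fun ω =>
    (hX ω).symm ▸ Real.one_le_rpow h1δ.le (sum_nonneg fun i _ => hZ0 i ω)
  have hXpos : 0 < ∫ ω, X ω ∂μ :=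
    zero_lt_one.trans_le (by simpa using integral_mono (integrable_const 1) hXint hX1)
  have hmoment : ∫ ω, X ω ∂μ ≤ Real.exp (δ * b) :=
    integral_prod_one_add_mul_le_exp hmeas (fun j i => measurable_pastFiltration hmeas)
      hδ.le hZ0 hZ1 hB
  set t := (1 + δ) ^ ((1 + δ) * b)
  have hevent : {ω | ∑ i, Z i ω > (1 + δ) * b} = {ω | t < X ω} := by
    ext ω
    simp [t, hX, Real.rpow_lt_rpow_left_iff h1δ]
  have hmarkov := mul_meas_gt_lt_integral_of_nonneg (by fun_prop)
    (.of_forall fun ω => zero_le_one.trans (hX1 ω)) hXpos t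
  have hbound : (Real.exp δ / (1 + δ) ^ (1 + δ)) ^ b = Real.exp (δ * b) / t := by
    rw [Real.div_rpow (Real.exp_nonneg _) (Real.rpow_nonneg (by linarith) _),
      ← Real.exp_mul, ← Real.rpow_mul (by linarith)]
  rw [hbound, hevent, lt_div_iff₀ (by positivity), mul_comm]
  exact hmarkov.trans_le hmoment

theorem chernoff_upper_dependent
    {Ω : Type*} [MeasurableSpace Ω] (μ : Measure Ω) [IsProbabilityMeasure μ]
    (ℓ : ℕ) (Z : Fin ℓ → Ω → ℝ)
    (hmeas : ∀ i, Measurable (Z i))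
    (hbin : ∀ i ω, Z i ω = 0 ∨ Z i ω = 1)
    (p : Fin ℓ → Ω → ℝ)
    (hp : ∀ i, p i =
      μ[Z i | ⨆ j : Fin ℓ, ⨆ _ : j < i, MeasurableSpace.comap (Z j) inferInstance])
    (b : ℝ) (hb : 0 ≤ b)
    (hB : ∀ᵐ ω ∂μ, (∑ i, p i ω) ≤ b)
    (δ : ℝ) (hδ : 0 < δ) :
    (μ {ω | (∑ i, Z i ω) > (1 + δ) * b}).toReal
      < (Real.exp δ / (1 + δ) ^ (1 + δ)) ^ b :=
  chernoff_upper_dependent_general μ ℓ Z hmeas hbin p hp b hB δ hδ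
end

section
/- Let Z₁,…,Z_ℓ be binary (0/1-valued) random variables and for each i let pᵢ = Pr(Zᵢ = 1 | Z₁,…,Z_{i−1}). Let Z = ∑ᵢ Zᵢ and B = ∑ᵢ pᵢ. If b ≥ 0 is such that B ≥ b almost surely, then for any 0 < δ < 1, Pr(Z < (1−δ)·b) < e^{−b·δ²/2}. -/
/-! Put c = eᵗ − 1 ∈ (−1, 0] for t ≤ 0. Since pᵢ is the conditional expectation of Zᵢ given
the past, the factor gᵢ = exp(−c pᵢ)(1 + c Zᵢ) has conditional expectation
exp(−c pᵢ)(1 + c pᵢ) ≤ 1, so peeling off the factors from the last one gives E[∏ gᵢ] ≤ 1.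
Convexity of exp gives e^{t Zᵢ} ≤ 1 + c Zᵢ on [0, 1], and B ≥ b gives exp(−c B) ≥ exp(−c b);
hence E[e^{t Z}] ≤ exp(c b). Markov's inequality at t = −δ together with
e^{−δ} < 1 − δ + δ²/2 yields the bound. -/

open MeasureTheory ProbabilityTheory Real

theorem Real.exp_neg_lt_one_sub_add_sq_div_two {x : ℝ} (hx : 0 < x) :
    exp (-x) < 1 - x + x ^ 2 / 2 := by
  let f : ℝ → ℝ := fun y => 1 - y + y ^ 2 / 2 - exp (-y)
  have hf : StrictMonoOn f (Set.Ici 0) := by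
    refine strictMonoOn_of_deriv_pos (convex_Ici 0) (by fun_prop) fun y hy => ?_
    rw [interior_Ici, Set.mem_Ioi] at hy
    have hderiv : HasDerivAt f (-1 + y + exp (-y)) y := by
      refine ((((hasDerivAt_id y).const_sub 1).add ((hasDerivAt_pow 2 y).div_const 2)).sub
        (hasDerivAt_neg y).exp).congr_deriv ?_
      norm_num
    rw [hderiv.deriv]
    linarith [add_one_lt_exp (neg_ne_zero.mpr hy.ne')]
  simpa [f] using hf Set.self_mem_Ici hx.le hx

theorem Real.exp_mul_le_one_add_mul {t z : ℝ} (hz0 : 0 ≤ z) (hz1 : z ≤ 1) :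
    exp (t * z) ≤ 1 + (exp t - 1) * z := by
  have := convexOn_exp.2 (Set.mem_univ 0) (Set.mem_univ t) (sub_nonneg.2 hz1) hz0 (by ring)
  simp only [smul_eq_mul, mul_zero, zero_add, exp_zero, mul_one] at this
  rw [mul_comm t z]
  linarith

section
variable {Ω : Type*} {m₀ : MeasurableSpace Ω} {μ : Measure Ω}

theorem condExp_exp_neg_mul_condExp_mul_one_add_mul_le_one [IsFiniteMeasure μ]
    {m : MeasurableSpace Ω} (hm : m ≤ m₀) {X : Ω → ℝ} (hX : Integrable X μ) (c : ℝ) :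
    μ[fun ω => exp (-(c * μ[X | m] ω)) * (1 + c * X ω) | m] ≤ᵐ[μ] 1 := by
  by_cases hint : Integrable (fun ω => exp (-(c * μ[X | m] ω)) * (1 + c * X ω)) μ
  swap
  · rw [condExp_of_not_integrable hint]
    exact ae_of_all _ fun _ => zero_le_one
  have hpull : μ[fun ω => exp (-(c * μ[X | m] ω)) * (1 + c * X ω) | m] =ᵐ[μ]
      fun ω => exp (-(c * μ[X | m] ω)) * μ[fun ω => 1 + c * X ω | m] ω :=
    condExp_mul_of_stronglyMeasurable_left
      (continuous_exp.comp_stronglyMeasurable (stronglyMeasurable_condExp.const_mul c).neg) hint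
    ((integrable_const 1).add (hX.const_mul c))
  have hlin : μ[fun ω => 1 + c * X ω | m] =ᵐ[μ] fun ω => 1 + c * μ[X | m] ω := by
    have : (fun ω => 1 + c * X ω) = (fun _ => 1) + c • X := rfl
    filter_upwards [condExp_add (integrable_const 1) (hX.smul c) m, condExp_smul c X m]
      with ω h_add h_smul
    simp_all [condExp_const hm]
  filter_upwards [hpull, hlin] with ω h_pull h_lin
  set q := c * μ[X | m] ω
  calc μ[fun ω => exp (-(c * μ[X | m] ω)) * (1 + c * X ω) | m] ω
      = exp (-q) * (1 + q) := by rw [h_pull, h_lin]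
    _ ≤ exp (-q) * exp q := by gcongr; linarith [add_one_le_exp q]
    _ = 1 := by rw [← exp_add, neg_add_cancel, exp_zero]

theorem integral_prod_le_one_of_condExp_le_one {ι : Type*} [LinearOrder ι]
    [IsProbabilityMeasure μ]
    (F : ι → MeasurableSpace Ω) (hF : ∀ i, F i ≤ m₀) (g : ι → Ω → ℝ)
    (hg_adapted : ∀ i j, i < j → StronglyMeasurable[F j] (g i))
    (hg_meas : ∀ i, AEStronglyMeasurable (g i) μ)
    (hg_bdd : ∀ i, ∃ C, ∀ᵐ ω ∂μ, ‖g i ω‖ ≤ C) (hg_nonneg : ∀ i ω, 0 ≤ g i ω)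
    (hg_cond : ∀ i, μ[g i | F i] ≤ᵐ[μ] 1) (s : Finset ι) :
    Integrable (fun ω => ∏ i ∈ s, g i ω) μ ∧ ∫ ω, ∏ i ∈ s, g i ω ∂μ ≤ 1 := by
  classical
  induction s using Finset.induction_on_max with
  | empty => simp
  | insert a s has ih =>
    obtain ⟨hG_int, hG_le⟩ := ih
    set G := fun ω => ∏ i ∈ s, g i ω
    have hG_meas : StronglyMeasurable[F a] G :=
      Finset.stronglyMeasurable_fun_prod s fun i hi => hg_adapted i a (has i hi)
    have hprod : (fun ω => ∏ i ∈ insert a s, g i ω) = G * g a := by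
      ext ω
      rw [Finset.prod_insert fun h => (has a h).false, mul_comm]
      rfl
    obtain ⟨C, hC⟩ := hg_bdd a
    have hGg_int : Integrable (G * g a) μ := hG_int.mul_bdd (hg_meas a) hC
    have hpull := condExp_mul_of_stronglyMeasurable_left hG_meas hGg_int
      (Integrable.of_bound (hg_meas a) C hC)
    rw [hprod]
    refine ⟨hGg_int, ?_⟩
    calc ∫ ω, (G * g a) ω ∂μ
        = ∫ ω, μ[G * g a | F a] ω ∂μ := (integral_condExp (hF a)).symm
      _ ≤ ∫ ω, G ω ∂μ := by
        refine integral_mono_ae integrable_condExp hG_int ?_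
        filter_upwards [hpull, hg_cond a] with ω h_pull h_cond
        rw [h_pull, Pi.mul_apply]
        exact mul_le_of_le_one_right (Finset.prod_nonneg fun i _ => hg_nonneg i ω) h_cond
      _ ≤ 1 := hG_le

theorem mgf_sum_le_exp_of_le_sum_condExp {ι : Type*} [LinearOrder ι] [Fintype ι]
    [IsProbabilityMeasure μ] (F : ι → MeasurableSpace Ω) (hF : ∀ i, F i ≤ m₀)
    (hF_mono : Monotone F) (Z : ι → Ω → ℝ) (hZ_meas : ∀ i, Measurable (Z i))
    (hZ_adapted : ∀ i j, i < j → Measurable[F j] (Z i))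
    (hZ_nonneg : ∀ i ω, 0 ≤ Z i ω) (hZ_le_one : ∀ i ω, Z i ω ≤ 1) {b : ℝ}
    (hB : ∀ᵐ ω ∂μ, b ≤ ∑ i, μ[Z i | F i] ω) {t : ℝ} (ht : t ≤ 0) :
    mgf (fun ω => ∑ i, Z i ω) μ t ≤ exp ((exp t - 1) * b) := by
  set c := exp t - 1
  have hc_nonpos : c ≤ 0 := by linarith [exp_le_one_iff.2 ht]
  have hc_gt : -1 < c := by linarith [exp_pos t]
  have hZ_int (i : ι) : Integrable (Z i) μ :=
    .of_bound (hZ_meas i).aestronglyMeasurable 1 (ae_of_all _ fun ω => by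
      rw [norm_eq_abs, abs_of_nonneg (hZ_nonneg i ω)]; exact hZ_le_one i ω)
  set g := fun i ω => exp (-(c * μ[Z i | F i] ω)) * (1 + c * Z i ω)
  have hg_sm (i : ι) {m : MeasurableSpace Ω} (hm : F i ≤ m) (hZ : Measurable[m] (Z i)) :
      StronglyMeasurable[m] (g i) :=
    (continuous_exp.comp_stronglyMeasurable
      ((stronglyMeasurable_condExp.mono hm).const_mul c).neg).mul
      ((hZ.stronglyMeasurable.const_mul c).const_add 1)
  have h_one_add (i : ι) (ω : Ω) : 0 ≤ 1 + c * Z i ω ∧ 1 + c * Z i ω ≤ 1 :=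
    ⟨by nlinarith [hZ_nonneg i ω, hZ_le_one i ω], by nlinarith [hZ_nonneg i ω]⟩
  have hg_nonneg (i : ι) (ω : Ω) : 0 ≤ g i ω := mul_nonneg (exp_pos _).le (h_one_add i ω).1
  have hg_bdd (i : ι) : ∀ᵐ ω ∂μ, ‖g i ω‖ ≤ exp (-c) := by
    have hp : ∀ᵐ ω ∂μ, |μ[Z i | F i] ω| ≤ 1 := ae_bdd_abs_condExp_of_ae_bdd_abs
      (ae_of_all _ fun ω => abs_le.2 ⟨by linarith [hZ_nonneg i ω], hZ_le_one i ω⟩)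
    filter_upwards [hp] with ω hω
    have hcp := mul_le_mul_of_nonpos_left (abs_le.1 hω).2 hc_nonpos
    rw [norm_of_nonneg (hg_nonneg i ω), ← mul_one (exp (-c))]
    exact mul_le_mul (exp_le_exp.2 (by linarith)) (h_one_add i ω).2 (h_one_add i ω).1
      (exp_pos _).le
  obtain ⟨hprod_int, hprod_le⟩ := integral_prod_le_one_of_condExp_le_one F hF g
    (fun i j hij => hg_sm i (hF_mono hij.le) (hZ_adapted i j hij))
    (fun i => (hg_sm i (hF i) (hZ_meas i)).aestronglyMeasurable) (fun i => ⟨_, hg_bdd i⟩)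
    hg_nonneg (fun i => condExp_exp_neg_mul_condExp_mul_one_add_mul_le_one (hF i) (hZ_int i) c)
    Finset.univ
  have hprod_ge : ∀ᵐ ω ∂μ, exp (-(c * b)) * exp (t * ∑ i, Z i ω) ≤ ∏ i, g i ω := by
    filter_upwards [hB] with ω hω
    have hsplit :
        ∏ i, g i ω = exp (-(c * ∑ i, μ[Z i | F i] ω)) * ∏ i, (1 + c * Z i ω) := by
      simp only [g, Finset.prod_mul_distrib, Finset.mul_sum, ← Finset.sum_neg_distrib, exp_sum]
    have hcB := mul_le_mul_of_nonpos_left hω hc_nonpos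
    rw [hsplit, Finset.mul_sum, exp_sum]
    exact mul_le_mul (exp_le_exp.2 (by linarith))
      (Finset.prod_le_prod (fun i _ => (exp_pos _).le)
        fun i _ => exp_mul_le_one_add_mul (hZ_nonneg i ω) (hZ_le_one i ω))
      (by positivity) (exp_pos _).le
  have hscaled : exp (-(c * b)) * mgf (fun ω => ∑ i, Z i ω) μ t ≤ 1 :=
    calc exp (-(c * b)) * mgf (fun ω => ∑ i, Z i ω) μ t
        = ∫ ω, exp (-(c * b)) * exp (t * ∑ i, Z i ω) ∂μ := (integral_const_mul _ _).symm
      _ ≤ ∫ ω, ∏ i, g i ω ∂μ :=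
        integral_mono_of_nonneg (ae_of_all _ fun _ => by positivity) hprod_int hprod_ge
      _ ≤ 1 := hprod_le
  rwa [exp_neg, ← div_eq_inv_mul, div_le_one (exp_pos _)] at hscaled

theorem measureReal_le_le_exp_mul_of_mgf_le [IsFiniteMeasure μ] {X : Ω → ℝ}
    (hX : Measurable X) (hX_nonneg : ∀ ω, 0 ≤ X ω) {t C : ℝ} (ht : t ≤ 0)
    (h : mgf X μ t ≤ C) (a : ℝ) : μ.real {ω | X ω ≤ a} ≤ exp (-t * a) * C := by
  have hint : Integrable (fun ω => exp (t * X ω)) μ := by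
    refine .of_bound (by fun_prop) 1 (ae_of_all _ fun ω => ?_)
    rw [norm_of_nonneg (exp_pos _).le, exp_le_one_iff]
    exact mul_nonpos_of_nonpos_of_nonneg ht (hX_nonneg ω)
  exact (measure_le_le_exp_mul_mgf a ht hint).trans (mul_le_mul_of_nonneg_left h (exp_pos _).le)

theorem monotone_iSup_comap_lt {ι β : Type*} [Preorder ι] [MeasurableSpace β]
    (Z : ι → Ω → β) :
    Monotone fun i => ⨆ j, ⨆ _ : j < i, MeasurableSpace.comap (Z j) ‹MeasurableSpace β› :=
  fun _ _ hii' => iSup₂_mono' fun j hj => ⟨j, hj.trans_le hii', le_rfl⟩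

theorem measurable_iSup_comap_lt {ι β : Type*} [Preorder ι] [MeasurableSpace β]
    (Z : ι → Ω → β) {i j : ι} (hij : i < j) :
    Measurable[⨆ k, ⨆ _ : k < j, MeasurableSpace.comap (Z k) ‹MeasurableSpace β›] (Z i) :=
  measurable_iff_comap_le.2
    (le_iSup₂ (f := fun k (_ : k < j) => MeasurableSpace.comap (Z k) _) i hij)

end

theorem chernoff_lower_dependent_general
    {Ω : Type*} [MeasurableSpace Ω] (μ : Measure Ω) [IsProbabilityMeasure μ]
    (ℓ : ℕ) (Z : Fin ℓ → Ω → ℝ)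
    (hmeas : ∀ i, Measurable (Z i))
    (hbin : ∀ i ω, Z i ω = 0 ∨ Z i ω = 1)
    (p : Fin ℓ → Ω → ℝ)
    (hp : ∀ i, p i =
      μ[Z i | ⨆ j : Fin ℓ, ⨆ _ : j < i, MeasurableSpace.comap (Z j) inferInstance])
    (b : ℝ)
    (hB : ∀ᵐ ω ∂μ, b ≤ (∑ i, p i ω))
    (δ : ℝ) (hδ0 : 0 < δ) :
    (μ {ω | (∑ i, Z i ω) < (1 - δ) * b}).toReal
      < Real.exp (-b * δ ^ 2 / 2) := by
  have hZ_nonneg (i ω) : 0 ≤ Z i ω := by rcases hbin i ω with h | h <;> simp [h]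
  have hZ_le_one (i ω) : Z i ω ≤ 1 := by rcases hbin i ω with h | h <;> simp [h]
  have hsum_nonneg (ω) : 0 ≤ ∑ i, Z i ω := Finset.sum_nonneg fun i _ => hZ_nonneg i ω
  rcases lt_trichotomy b 0 with hb | rfl | hb
  · exact measureReal_le_one.trans_lt (one_lt_exp_iff.2 (by nlinarith [pow_pos hδ0 2]))
  · simp [(hsum_nonneg _).not_gt]
  have hmgf := mgf_sum_le_exp_of_le_sum_condExp _
    (fun i => iSup₂_le fun j _ => (hmeas j).comap_le) (monotone_iSup_comap_lt Z) Z hmeas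
    (fun _ _ => measurable_iSup_comap_lt Z) hZ_nonneg hZ_le_one (by simpa only [hp] using hB)
    (neg_nonpos.2 hδ0.le)
  calc μ.real {ω | ∑ i, Z i ω < (1 - δ) * b}
      ≤ μ.real {ω | ∑ i, Z i ω ≤ (1 - δ) * b} :=
        measureReal_mono (Set.ofPred_subset_ofPred.2 fun _ => le_of_lt)
    _ ≤ exp (δ * ((1 - δ) * b)) * exp ((exp (-δ) - 1) * b) := by
      simpa using measureReal_le_le_exp_mul_of_mgf_le (by fun_prop) hsum_nonneg
        (neg_nonpos.2 hδ0.le) hmgf ((1 - δ) * b)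
    _ < exp (-b * δ ^ 2 / 2) := by
      rw [← exp_add, exp_lt_exp]
      nlinarith [exp_neg_lt_one_sub_add_sq_div_two hδ0]

theorem chernoff_lower_dependent
    {Ω : Type*} [MeasurableSpace Ω] (μ : Measure Ω) [IsProbabilityMeasure μ]
    (ℓ : ℕ) (Z : Fin ℓ → Ω → ℝ)
    (hmeas : ∀ i, Measurable (Z i))
    (hbin : ∀ i ω, Z i ω = 0 ∨ Z i ω = 1)
    (p : Fin ℓ → Ω → ℝ)
    (hp : ∀ i, p i =
      μ[Z i | ⨆ j : Fin ℓ, ⨆ _ : j < i, MeasurableSpace.comap (Z j) inferInstance])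
    (b : ℝ) (hb : 0 ≤ b)
    (hB : ∀ᵐ ω ∂μ, b ≤ (∑ i, p i ω))
    (δ : ℝ) (hδ0 : 0 < δ) (hδ1 : δ < 1) :
    (μ {ω | (∑ i, Z i ω) < (1 - δ) * b}).toReal
      < Real.exp (-b * δ ^ 2 / 2) :=
  chernoff_lower_dependent_general μ ℓ Z hmeas hbin p hp b hB δ hδ0
end

section
/- Let (Λ_i) and (Λ'_i) be nondecreasing integer sequences with Λ_0 = Λ'_0, such that at every step exactly one of them increases by at most d, and the scheduling rule ensures |Λ_i − Λ'_i| ≤ d for all i. Fix i and k ≥ 0 and let S = min{j : Λ_j − Λ_i ≥ k}. Then S − i ≤ 2k + 2d and Λ'_S − Λ'_i ≤ k + 2d. -/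
theorem step_scheduling_interval_bound
    (Λ Λ' : ℕ → ℤ) (d : ℤ) (hd : 1 ≤ d)
    (hmono : Monotone Λ) (hmono' : Monotone Λ')
    (hzero : Λ 0 = Λ' 0)
    (hstep : ∀ j : ℕ,
      (Λ (j + 1) = Λ j ∧ Λ' j < Λ' (j + 1) ∧ Λ' (j + 1) ≤ Λ' j + d) ∨
      (Λ' (j + 1) = Λ' j ∧ Λ j < Λ (j + 1) ∧ Λ (j + 1) ≤ Λ j + d))
    (hinv : ∀ j : ℕ, |Λ j - Λ' j| ≤ d)
    (i : ℕ) (k : ℤ) (hk : 0 ≤ k)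
    (S : ℕ)
    (hS : Λ S - Λ i ≥ k ∧ ∀ j : ℕ, j < S → ¬(Λ j - Λ i ≥ k)) :
    (S : ℤ) - (i : ℤ) ≤ 2 * k + 2 * d ∧ Λ' S - Λ' i ≤ k + 2 * d := by
  obtain ⟨hSk, hSmin⟩ := hS
  by_cases hiS : S ≤ i
  · refine ⟨?_, ?_⟩
    · have h1 : (S : ℤ) ≤ (i : ℤ) := by exact_mod_cast hiS
      linarith
    · have h2 := hmono' hiS
      linarith
  push_neg at hiS
  obtain ⟨m, rfl⟩ : ∃ m, S = m + 1 := ⟨S - 1, by omega⟩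
  have him : i ≤ m := by omega
  have hm_lt : Λ m - Λ i < k := by
    have := hSmin m (by omega); linarith
  have hm1 : Λ m - Λ i ≤ k - 1 := by linarith [Int.add_one_le_iff.mpr hm_lt]
  have hlast : Λ' (m + 1) = Λ' m := by
    rcases hstep m with ⟨h1, _, _⟩ | ⟨h1, _, _⟩
    · exfalso; rw [h1] at hSk; linarith
    · exact h1
  have habs_m := abs_le.mp (hinv m)
  have habs_i := abs_le.mp (hinv i)
  have hΛ'm : Λ' m - Λ' i ≤ k - 1 + 2 * d := by linarith
  have key : ∀ n : ℕ, (n : ℤ) ≤ (Λ (i + n) - Λ i) + (Λ' (i + n) - Λ' i) := by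
    intro n
    induction n with
    | zero => simp
    | succ p ih =>
      have hip : i + (p + 1) = (i + p) + 1 := by omega
      rw [hip]
      rcases hstep (i + p) with ⟨h1, h2, h3⟩ | ⟨h1, h2, h3⟩
      · have h2' := Int.add_one_le_iff.mpr h2
        push_cast
        linarith
      · have h2' := Int.add_one_le_iff.mpr h2
        push_cast
        linarith
  have hkey := key (m - i)
  rw [Nat.add_sub_cancel' him] at hkey
  have hcast : ((m - i : ℕ) : ℤ) = (m : ℤ) - (i : ℤ) := by
    push_cast [Nat.cast_sub him]; ring
  rw [hcast] at hkey
  refine ⟨?_, ?_⟩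
  · push_cast
    linarith
  · rw [hlast]
    linarith
end
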